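/- Let T, R, c > 0 and let y:[0,T]→(0,∞) be differentiable with y(t) ≤ R for all t and |y'(t)| ≤ c·φ(y(t)) where φ(x)=x·max(−ln x,1). If y(0) = y₀ > 0, then for all t ∈ [0,T]: (y₀/(10(R+1)))^{exp(c t)} ≤ y(t) ≤ 10(R+1)·y₀^{exp(−c t)}. -/

import Mathlib

/-!
With `M = 10 (R + 1)` we have `e·y ≤ M` and `1 ≤ M`, so `φ(y) ≤ y (log M - log y)`. Hence
`u = log M - log y` satisfies `|u'| = |y'| / y ≤ c u`, which makes `u e^{-ct}` antitone and
`u e^{ct}` monotone: `u(0) e^{-ct} ≤ u(t) ≤ u(0) e^{ct}`. Exponentiating these two bounds gives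
the claim.
-/

open Set Real

noncomputable def phi (x : ℝ) : ℝ := x * max (-Real.log x) 1

theorem monotoneOn_mul_exp_neg_mul_of_mul_le_deriv {D : Set ℝ} (hD : Convex ℝ D)
    {u u' : ℝ → ℝ} {k : ℝ} (hu : ∀ t ∈ D, HasDerivAt u (u' t) t)
    (hle : ∀ t ∈ D, k * u t ≤ u' t) :
    MonotoneOn (fun t => u t * exp (-(k * t))) D := by
  have hderiv : ∀ t ∈ D, HasDerivAt (fun t => u t * exp (-(k * t)))
      ((u' t - k * u t) * exp (-(k * t))) t := fun t ht => by
    have hexp : HasDerivAt (fun s => exp (-(k * s))) (exp (-(k * t)) * -k) t := by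
      simpa using ((hasDerivAt_id t).const_mul k).neg.exp
    exact ((hu t ht).mul hexp).congr_deriv (by ring)
  refine monotoneOn_of_hasDerivWithinAt_nonneg hD
    (fun t ht => (hderiv t ht).continuousAt.continuousWithinAt)
    (fun t ht => (hderiv t (interior_subset ht)).hasDerivWithinAt) fun t ht => ?_
  exact mul_nonneg (sub_nonneg.2 (hle t (interior_subset ht))) (exp_pos _).le

theorem antitoneOn_mul_exp_neg_mul_of_deriv_le_mul {D : Set ℝ} (hD : Convex ℝ D)
    {u u' : ℝ → ℝ} {k : ℝ} (hu : ∀ t ∈ D, HasDerivAt u (u' t) t)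
    (hle : ∀ t ∈ D, u' t ≤ k * u t) :
    AntitoneOn (fun t => u t * exp (-(k * t))) D := by
  have h := monotoneOn_mul_exp_neg_mul_of_mul_le_deriv hD (u := -u) (u' := -u') (k := k)
    (fun t ht => (hu t ht).neg) fun t ht => by simpa using hle t ht
  intro s hs t ht hst
  simpa using h hs ht hst

theorem mul_exp_neg_le_and_le_mul_exp_of_abs_deriv_le {u u' : ℝ → ℝ} {a b c : ℝ}
    (hu : ∀ t ∈ Icc a b, HasDerivAt u (u' t) t) (hb : ∀ t ∈ Icc a b, |u' t| ≤ c * u t)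
    {t : ℝ} (ht : t ∈ Icc a b) :
    u a * exp (-(c * (t - a))) ≤ u t ∧ u t ≤ u a * exp (c * (t - a)) := by
  have ha : a ∈ Icc a b := ⟨le_rfl, ht.1.trans ht.2⟩
  have hmono := monotoneOn_mul_exp_neg_mul_of_mul_le_deriv (convex_Icc a b) hu (k := -c)
    fun s hs => by linarith [neg_abs_le (u' s), hb s hs]
  have hanti := antitoneOn_mul_exp_neg_mul_of_deriv_le_mul (convex_Icc a b) hu (k := c)
    fun s hs => (le_abs_self _).trans (hb s hs)
  have hlower := hmono ha ht ht.1
  have hupper := hanti ha ht ht.1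
  simp only at hlower hupper
  constructor
  · calc u a * exp (-(c * (t - a))) = u a * exp (-(-c * a)) * exp (-(c * t)) := by
          rw [mul_assoc, ← exp_add]; congr 2; ring
      _ ≤ u t * exp (-(-c * t)) * exp (-(c * t)) := mul_le_mul_of_nonneg_right hlower (exp_pos _).le
      _ = u t := by rw [mul_assoc, ← exp_add]; simp
  · calc u t = u t * exp (-(c * t)) * exp (c * t) := by rw [mul_assoc, ← exp_add]; simp
      _ ≤ u a * exp (-(c * a)) * exp (c * t) := mul_le_mul_of_nonneg_right hupper (exp_pos _).le
      _ = u a * exp (c * (t - a)) := by rw [mul_assoc, ← exp_add]; congr 2; ring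

theorem phi_le_mul_log_sub {x M : ℝ} (hx : 0 < x) (hM : 1 ≤ M) (hxM : exp 1 * x ≤ M) :
    phi x ≤ x * (log M - log x) := by
  refine mul_le_mul_of_nonneg_left (max_le ?_ ?_) hx.le
  · linarith [log_nonneg hM]
  · rw [← log_div (by positivity) hx.ne', le_log_iff_exp_le (by positivity), le_div_iff₀ hx]
    exact hxM

theorem div_rpow_le_of_log_sub_le_mul {x x₀ M E : ℝ} (hx : 0 < x) (hx₀ : 0 < x₀) (hM : 1 ≤ M)
    (h : log M - log x ≤ (log M - log x₀) * E) : (x₀ / M) ^ E ≤ x := by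
  rw [← log_le_log_iff (by positivity) hx, log_rpow (by positivity), log_div hx₀.ne' (by positivity)]
  nlinarith [log_nonneg hM]

theorem le_mul_rpow_of_mul_le_log_sub {x x₀ M E : ℝ} (hx : 0 < x) (hx₀ : 0 < x₀) (hM : 1 ≤ M)
    (hE : 0 ≤ E) (h : (log M - log x₀) * E ≤ log M - log x) : x ≤ M * x₀ ^ E := by
  rw [← log_le_log_iff hx (by positivity), log_mul (by positivity) (by positivity), log_rpow hx₀]
  nlinarith [log_nonneg hM]

theorem ode_log_gronwall (T R c : ℝ) (hc : 0 < c)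
    (y y' : ℝ → ℝ)
    (hderiv : ∀ t ∈ Set.Icc (0:ℝ) T, HasDerivAt y (y' t) t)
    (hpos : ∀ t ∈ Set.Icc (0:ℝ) T, 0 < y t)
    (hbnd : ∀ t ∈ Set.Icc (0:ℝ) T, y t ≤ R)
    (hineq : ∀ t ∈ Set.Icc (0:ℝ) T, |y' t| ≤ c * phi (y t)) :
    ∀ t ∈ Set.Icc (0:ℝ) T,
      (y 0 / (10 * (R + 1))) ^ Real.exp (c * t) ≤ y t ∧
      y t ≤ 10 * (R + 1) * (y 0) ^ Real.exp (-(c * t)) := by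
  intro t ht
  set M : ℝ := 10 * (R + 1)
  have hM : ∀ s ∈ Icc (0:ℝ) T, 1 ≤ M ∧ exp 1 * y s ≤ M := fun s hs => by
    have hys := hpos s hs
    have hyR := hbnd s hs
    constructor <;> nlinarith [exp_one_lt_d9]
  have hu : ∀ s ∈ Icc (0:ℝ) T, HasDerivAt (fun s => log M - log (y s)) (-(y' s / y s)) s :=
    fun s hs => ((hderiv s hs).log (hpos s hs).ne').const_sub _
  have hb : ∀ s ∈ Icc (0:ℝ) T, |-(y' s / y s)| ≤ c * (log M - log (y s)) := fun s hs => by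
    rw [abs_neg, abs_div, abs_of_pos (hpos s hs), div_le_iff₀ (hpos s hs)]
    calc |y' s| ≤ c * phi (y s) := hineq s hs
      _ ≤ c * (y s * (log M - log (y s))) :=
          mul_le_mul_of_nonneg_left (phi_le_mul_log_sub (hpos s hs) (hM s hs).1 (hM s hs).2) hc.le
      _ = c * (log M - log (y s)) * y s := by ring
  have h0 : (0:ℝ) ∈ Icc 0 T := ⟨le_rfl, ht.1.trans ht.2⟩
  obtain ⟨hlo, hup⟩ := mul_exp_neg_le_and_le_mul_exp_of_abs_deriv_le hu hb ht
  simp only [sub_zero] at hlo hup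
  exact ⟨div_rpow_le_of_log_sub_le_mul (hpos t ht) (hpos 0 h0) (hM t ht).1 hup,
    le_mul_rpow_of_mul_le_log_sub (hpos t ht) (hpos 0 h0) (hM t ht).1 (exp_pos _).le hlo⟩
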